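/- For any weighted graph G: (i) the derivative of the matching polynomial satisfies μ(G)'(x) = Σ_{j=1}^{n} μ(G∖j)(x); (ii) for every vertex i, the derivative of the rational function α_i(G) = μ(G)/μ(G∖i) satisfies α_i(G)'(x) = 1 + Σ_{j ≠ i} Σ_{c ∈ [i→j]} λ_c · (μ(G∖c)(x)/μ(G∖i)(x))² as an identity of rational functions. -/

import Mathlib

open Polynomial
open scoped Classical

/-- A matching of the weighted graph with edge weights `lam`, inside the vertex set `A`:
a set of pairs `(j,k)` with `j < k`, `lam j k ≠ 0`, endpoints in `A`,
no two pairs sharing a vertex. -/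
def IsMatching {n : ℕ} (lam : Fin n → Fin n → ℝ) (A : Finset (Fin n))
    (M : Finset (Fin n × Fin n)) : Prop :=
  (∀ e ∈ M, e.1 < e.2 ∧ lam e.1 e.2 ≠ 0 ∧ e.1 ∈ A ∧ e.2 ∈ A) ∧
  ∀ e ∈ M, ∀ f ∈ M, e ≠ f → e.1 ≠ f.1 ∧ e.1 ≠ f.2 ∧ e.2 ≠ f.1 ∧ e.2 ≠ f.2

/-- The vertices covered by a matching. -/
def mVerts {n : ℕ} (M : Finset (Fin n × Fin n)) : Finset (Fin n) :=
  M.image Prod.fst ∪ M.image Prod.snd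

/-- The finite set of matchings inside the vertex set `A`. -/
noncomputable def matchings {n : ℕ} (lam : Fin n → Fin n → ℝ) (A : Finset (Fin n)) :
    Finset (Finset (Fin n × Fin n)) :=
  Finset.univ.filter fun M => IsMatching lam A M

/-- The weighted matching polynomial of the induced weighted subgraph on the vertex set `A`
(the matching polynomial of the empty graph is `1`). -/
noncomputable def mu {n : ℕ} (r : Fin n → ℝ) (lam : Fin n → Fin n → ℝ)
    (A : Finset (Fin n)) : Polynomial ℝ :=
  ∑ M ∈ matchings lam A,
    (∏ i ∈ A \ mVerts M, (X - C (r i))) * C (∏ e ∈ M, lam e.1 e.2)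

/-- The multivariate matching polynomial evaluated at the complex numbers `x 1, …, x n`. -/
noncomputable def muC {n : ℕ} (lam : Fin n → Fin n → ℝ) (x : Fin n → ℂ) : ℂ :=
  ∑ M ∈ matchings lam (Finset.univ : Finset (Fin n)),
    (∏ i ∈ Finset.univ \ mVerts M, x i) * ∏ e ∈ M, (lam e.1 e.2 : ℂ)

/-- The constant `B_G`: for `n ≥ 3` the maximum over vertices `j` and sets
`A ⊆ [n] ∖ {j}` with `|A| = n - 2` of `∑_{k ∈ A} (-λ_{jk})`; `-λ_{12}/4` for `n = 2`;
`0` for `n = 1`. -/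
noncomputable def BG (n : ℕ) (lam : Fin n → Fin n → ℝ) : ℝ :=
  if 3 ≤ n then
    sSup {S : ℝ | ∃ j : Fin n, ∃ A : Finset (Fin n),
      j ∉ A ∧ A.card = n - 2 ∧ S = ∑ k ∈ A, -lam j k}
  else if h : n = 2 then -lam ⟨0, by omega⟩ ⟨1, by omega⟩ / 4
  else 0

/-- `l` is a path from `i` to `j` inside the vertex set `A`: a nonempty list of distinct
vertices of `A`, starting at `i`, ending at `j`, with consecutive vertices joined by
edges of nonzero weight. -/
def IsPathIn {n : ℕ} (lam : Fin n → Fin n → ℝ) (A : Finset (Fin n)) (i j : Fin n)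
    (l : List (Fin n)) : Prop :=
  l ≠ [] ∧ l.Nodup ∧ (∀ v ∈ l, v ∈ A) ∧ l.head? = some i ∧ l.getLast? = some j ∧
    l.Chain' fun u v => lam u v ≠ 0

/-- `λ_c`: the product of `-λ_e` over the edges `e` of the path `c` (equal to `1` for a
trivial path). -/
def pathWeight {n : ℕ} (lam : Fin n → Fin n → ℝ) (l : List (Fin n)) : ℝ :=
  ((l.zip l.tail).map fun p => -lam p.1 p.2).prod

/-- A real polynomial viewed as a rational function. -/
noncomputable def toRF (p : Polynomial ℝ) : RatFunc ℝ :=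
  algebraMap (Polynomial ℝ) (RatFunc ℝ) p

/-- The graph continued fraction `α_v = μ(A)/μ(A ∖ v)` as a rational function. -/
noncomputable def alpha {n : ℕ} (r : Fin n → ℝ) (lam : Fin n → Fin n → ℝ) (v : Fin n)
    (A : Finset (Fin n)) : RatFunc ℝ :=
  toRF (mu r lam A) / toRF (mu r lam (A.erase v))

/-- `λ_{i∼j} = -(∑_{c ∈ [i→j]} λ_c · μ(A∖c)²) / μ(A∖{i,j})²` as a rational function. -/
noncomputable def lamSim {n : ℕ} (r : Fin n → ℝ) (lam : Fin n → Fin n → ℝ) (i j : Fin n)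
    (A : Finset (Fin n)) : RatFunc ℝ :=
  -(∑ᶠ l ∈ {l : List (Fin n) | IsPathIn lam A i j l},
      toRF (C (pathWeight lam l) * mu r lam (A \ l.toFinset) ^ 2)) /
    toRF (mu r lam ((A.erase i).erase j)) ^ 2

/-- The value of a rational function at `θ`, taken after cancelling common factors;
`none` encodes the value `∞` (a pole). -/
noncomputable def valAt (f : RatFunc ℝ) (θ : ℝ) : Option ℝ :=
  if f.denom.eval θ = 0 then none else some (f.num.eval θ / f.denom.eval θ)

/-- The set `0_{θ,A}` of θ-essential vertices: `m_θ(A∖v) = m_θ(A) - 1`. -/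
def zeroSet {n : ℕ} (r : Fin n → ℝ) (lam : Fin n → Fin n → ℝ) (θ : ℝ)
    (A : Finset (Fin n)) : Set (Fin n) :=
  {v | v ∈ A ∧
    (mu r lam A).rootMultiplicity θ = (mu r lam (A.erase v)).rootMultiplicity θ + 1}

/-- The set `∞_{θ,A}`: `m_θ(A∖v) = m_θ(A) + 1`. -/
def infSet {n : ℕ} (r : Fin n → ℝ) (lam : Fin n → Fin n → ℝ) (θ : ℝ)
    (A : Finset (Fin n)) : Set (Fin n) :=
  {v | v ∈ A ∧
    (mu r lam (A.erase v)).rootMultiplicity θ = (mu r lam A).rootMultiplicity θ + 1}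

/-- The set `+_{θ,A}`: `m_θ(A∖v) = m_θ(A)` and `α_v(A)(θ) > 0`. -/
def plusSet {n : ℕ} (r : Fin n → ℝ) (lam : Fin n → Fin n → ℝ) (θ : ℝ)
    (A : Finset (Fin n)) : Set (Fin n) :=
  {v | v ∈ A ∧
    (mu r lam (A.erase v)).rootMultiplicity θ = (mu r lam A).rootMultiplicity θ ∧
    ∃ t : ℝ, valAt (alpha r lam v A) θ = some t ∧ 0 < t}

/-- The set `−_{θ,A}`: `m_θ(A∖v) = m_θ(A)` and `α_v(A)(θ) < 0`. -/
def minusSet {n : ℕ} (r : Fin n → ℝ) (lam : Fin n → Fin n → ℝ) (θ : ℝ)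
    (A : Finset (Fin n)) : Set (Fin n) :=
  {v | v ∈ A ∧
    (mu r lam (A.erase v)).rootMultiplicity θ = (mu r lam A).rootMultiplicity θ ∧
    ∃ t : ℝ, valAt (alpha r lam v A) θ = some t ∧ t < 0}

/-- The frontier `∂0_{θ,A}`: vertices not in `0_{θ,A}` with a neighbor in `0_{θ,A}`. -/
def frontierZero {n : ℕ} (r : Fin n → ℝ) (lam : Fin n → Fin n → ℝ) (θ : ℝ)
    (A : Finset (Fin n)) : Set (Fin n) :=
  {v | v ∈ A ∧ v ∉ zeroSet r lam θ A ∧ ∃ w ∈ zeroSet r lam θ A, lam v w ≠ 0}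

/-- The underlying simple graph: edges are the pairs with nonzero edge weight. -/
def wGraph {n : ℕ} (lam : Fin n → Fin n → ℝ) : SimpleGraph (Fin n) :=
  SimpleGraph.fromRel fun j k => lam j k ≠ 0


/-!
Differentiating the product `∏ (X - r v)` over the vertices left uncovered by a matching `M`
selects one uncovered vertex `j`, and the matchings avoiding `j` are exactly the matchings of
`G ∖ j`; this gives `μ(G)' = ∑ j, μ(G ∖ j)`. With it, the numerator of the quotient rule for
`μ(G) / μ(G ∖ i)` becomes `μ(G ∖ i)² + ∑_{j ≠ i} (μ(G ∖ i) μ(G ∖ j) - μ(G) μ(G ∖ i ∖ j))`, and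
each summand is `∑_{c : i → j} λ_c μ(G ∖ c)²` by the Heilmann–Lieb identity. That identity is
proved by induction on the vertex set: expanding `μ(G)` and `μ(G ∖ j)` along the edges at `i`
expresses the left side through the same quantities for `G ∖ i` and the vertices `k` adjacent
to `i`, which is how paths from `i` decompose by their first step. Finally `μ(G ∖ i)` is monic,
so the division takes place in the field of rational functions.
-/

section Matchings

variable {n : ℕ} {lam : Fin n → Fin n → ℝ} {A : Finset (Fin n)}
  {M N : Finset (Fin n × Fin n)} {e : Fin n × Fin n} {i k : Fin n}

lemma mem_mVerts {v : Fin n} : v ∈ mVerts M ↔ ∃ e ∈ M, v = e.1 ∨ v = e.2 := by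
  simp only [mVerts, Finset.mem_union, Finset.mem_image]
  grind

lemma mem_matchings : M ∈ matchings lam A ↔ IsMatching lam A M := by
  simp [matchings]

lemma isMatching_erase_iff :
    IsMatching lam (A.erase i) M ↔ IsMatching lam A M ∧ i ∉ mVerts M := by
  simp only [IsMatching, mem_mVerts, Finset.mem_erase]
  grind

lemma matchings_erase :
    matchings lam (A.erase i) = (matchings lam A).filter (i ∉ mVerts ·) := by
  ext M
  simp [mem_matchings, isMatching_erase_iff]

lemma IsMatching.erase_edge (hM : IsMatching lam A M) (he : e ∈ M) :
    IsMatching lam ((A.erase e.1).erase e.2) (M.erase e) := by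
  refine ⟨fun f hf => ?_, fun f hf g hg => hM.2 f (Finset.mem_of_mem_erase hf) g
    (Finset.mem_of_mem_erase hg)⟩
  obtain ⟨hfe, hfM⟩ := Finset.mem_erase.mp hf
  have := hM.2 f hfM e he hfe
  have := hM.1 f hfM
  simp only [Finset.mem_erase]
  grind

lemma IsMatching.notMem_of_erase_edge (hN : IsMatching lam ((A.erase e.1).erase e.2) N) :
    e ∉ N := fun he => by
  have := (hN.1 e he).2.2.1
  simp at this

lemma IsMatching.insert_edge (he1 : e.1 ∈ A) (he2 : e.2 ∈ A) (hlt : e.1 < e.2)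
    (he : lam e.1 e.2 ≠ 0) (hN : IsMatching lam ((A.erase e.1).erase e.2) N) :
    IsMatching lam A (insert e N) := by
  obtain ⟨h1, h2⟩ := hN
  simp only [IsMatching, Finset.mem_insert, Finset.mem_erase] at h1 h2 ⊢
  grind

lemma sdiff_mVerts_eq_erase_edge (he : e ∈ M) :
    A \ mVerts M = ((A.erase e.1).erase e.2) \ mVerts (M.erase e) := by
  ext v
  simp only [Finset.mem_sdiff, Finset.mem_erase, mem_mVerts]
  grind

end Matchings

section Recurrence

variable {n : ℕ} {r : Fin n → ℝ} {lam : Fin n → Fin n → ℝ} {A : Finset (Fin n)}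
  {M : Finset (Fin n × Fin n)} {e : Fin n × Fin n} {i k : Fin n}

/-- The edge `{i, k}` in the form `(j, k)` with `j < k` in which matchings store it. -/
def sortedPair (i k : Fin n) : Fin n × Fin n := (min i k, max i k)

lemma lam_sortedPair (hsym : ∀ j k, lam j k = lam k j) :
    lam (sortedPair i k).1 (sortedPair i k).2 = lam i k := by
  rcases le_total i k with h | h <;> simp [sortedPair, h, hsym k i]

lemma sortedPair_mem (hi : i ∈ A) (hk : k ∈ A) :
    (sortedPair i k).1 ∈ A ∧ (sortedPair i k).2 ∈ A := by
  rcases le_total i k with h | h <;> simp [sortedPair, h, hi, hk]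

lemma erase_sortedPair :
    (A.erase (sortedPair i k).1).erase (sortedPair i k).2 = (A.erase i).erase k := by
  rcases le_total i k with h | h <;> simp [sortedPair, h, Finset.erase_right_comm]

lemma IsMatching.eq_of_sortedPair_mem {k' : Fin n} (hM : IsMatching lam A M)
    (hk : sortedPair i k ∈ M) (hk' : sortedPair i k' ∈ M) : k = k' := by
  by_contra hne
  have := hM.2 _ hk _ hk'
  simp only [sortedPair, ne_eq, Prod.mk.injEq] at this
  grind

lemma IsMatching.mem_mVerts_iff (hM : IsMatching lam A M) :
    i ∈ mVerts M ↔ ∃ k ∈ A.erase i, sortedPair i k ∈ M := by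
  simp only [mem_mVerts, Finset.mem_erase, sortedPair]
  constructor
  · rintro ⟨e, he, hie⟩
    have := hM.1 e he
    rcases hie with rfl | rfl
    · exact ⟨e.2, by grind, by simpa [min_eq_left this.1.le, max_eq_right this.1.le]⟩
    · exact ⟨e.1, by grind, by simpa [min_eq_right this.1.le, max_eq_left this.1.le]⟩
  · rintro ⟨k, -, hk⟩
    exact ⟨_, hk, by rcases le_total i k with h | h <;> simp [h]⟩

noncomputable def matchingTerm (r : Fin n → ℝ) (lam : Fin n → Fin n → ℝ) (A : Finset (Fin n))
    (M : Finset (Fin n × Fin n)) : ℝ[X] :=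
  (∏ v ∈ A \ mVerts M, (X - C (r v))) * C (∏ e ∈ M, lam e.1 e.2)

lemma mu_eq_sum_matchingTerm :
    mu r lam A = ∑ M ∈ matchings lam A, matchingTerm r lam A M := rfl

lemma matchingTerm_of_notMem (hiA : i ∈ A) (hiM : i ∉ mVerts M) :
    matchingTerm r lam A M = (X - C (r i)) * matchingTerm r lam (A.erase i) M := by
  rw [matchingTerm, matchingTerm, ← Finset.mul_prod_erase _ _ (Finset.mem_sdiff.mpr ⟨hiA, hiM⟩),
    Finset.erase_sdiff_comm, mul_assoc]

lemma sum_matchingTerm_of_notMem (hi : i ∈ A) :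
    ∑ M ∈ (matchings lam A).filter (i ∉ mVerts ·), matchingTerm r lam A M =
      (X - C (r i)) * mu r lam (A.erase i) := by
  rw [mu_eq_sum_matchingTerm, Finset.mul_sum, matchings_erase]
  exact Finset.sum_congr rfl fun M hM => matchingTerm_of_notMem hi (Finset.mem_filter.mp hM).2

lemma sum_matchingTerm_of_mem (he1 : e.1 ∈ A) (he2 : e.2 ∈ A) (hlt : e.1 < e.2) :
    ∑ M ∈ (matchings lam A).filter (e ∈ ·), matchingTerm r lam A M =
      C (lam e.1 e.2) * mu r lam ((A.erase e.1).erase e.2) := by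
  by_cases he : lam e.1 e.2 = 0
  · rw [he, map_zero, zero_mul]
    refine Finset.sum_eq_zero fun M hM => ?_
    simp only [Finset.mem_filter, mem_matchings] at hM
    exact absurd he (hM.1.1 e hM.2).2.1
  rw [mu_eq_sum_matchingTerm, Finset.mul_sum]
  refine Finset.sum_nbij' (·.erase e) (insert e) (fun M hM => ?_) (fun N hN => ?_)
    (fun M hM => ?_) (fun N hN => ?_) (fun M hM => ?_)
  all_goals simp only [Finset.mem_filter, mem_matchings] at *
  · exact hM.1.erase_edge hM.2
  · exact ⟨hN.insert_edge he1 he2 hlt he, Finset.mem_insert_self _ _⟩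
  · exact Finset.insert_erase hM.2
  · exact Finset.erase_insert hN.notMem_of_erase_edge
  · rw [matchingTerm, matchingTerm, sdiff_mVerts_eq_erase_edge hM.2,
      ← Finset.mul_prod_erase _ _ hM.2, map_mul]
    ring

lemma mu_eq_vertex_expansion (hsym : ∀ j k, lam j k = lam k j) (hi : i ∈ A) :
    mu r lam A = (X - C (r i)) * mu r lam (A.erase i) +
      ∑ k ∈ A.erase i, C (lam i k) * mu r lam ((A.erase i).erase k) := by
  have hcover : (matchings lam A).filter (i ∈ mVerts ·) =
      (A.erase i).biUnion fun k => (matchings lam A).filter (sortedPair i k ∈ ·) := by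
    ext M
    simp only [Finset.mem_filter, Finset.mem_biUnion, mem_matchings]
    constructor
    · rintro ⟨hM, hiM⟩
      obtain ⟨k, hk, hkM⟩ := hM.mem_mVerts_iff.mp hiM
      exact ⟨k, hk, hM, hkM⟩
    · rintro ⟨k, hk, hM, hkM⟩
      exact ⟨hM, hM.mem_mVerts_iff.mpr ⟨k, hk, hkM⟩⟩
  have hdisj : (A.erase i : Set (Fin n)).PairwiseDisjoint
      fun k => (matchings lam A).filter (sortedPair i k ∈ ·) := by
    intro k _ k' _ hkk'
    refine Finset.disjoint_left.mpr fun M hk hk' => hkk' ?_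
    simp only [Finset.mem_filter, mem_matchings] at hk hk'
    exact hk.1.eq_of_sortedPair_mem hk.2 hk'.2
  rw [mu_eq_sum_matchingTerm, ← Finset.sum_filter_not_add_sum_filter _ (i ∈ mVerts ·),
    sum_matchingTerm_of_notMem hi, hcover, Finset.sum_biUnion hdisj]
  congr 1
  refine Finset.sum_congr rfl fun k hk => ?_
  have hik : i ≠ k := (Finset.ne_of_mem_erase hk).symm
  obtain ⟨h1, h2⟩ := sortedPair_mem hi (Finset.mem_of_mem_erase hk)
  rw [sum_matchingTerm_of_mem h1 h2 (min_lt_max.mpr hik), lam_sortedPair hsym, erase_sortedPair]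

end Recurrence

section Derivative

variable {n : ℕ} {r : Fin n → ℝ} {lam : Fin n → Fin n → ℝ} {A : Finset (Fin n)}

theorem derivative_mu (A : Finset (Fin n)) :
    derivative (mu r lam A) = ∑ j ∈ A, mu r lam (A.erase j) := by
  simp only [mu_eq_sum_matchingTerm, matchingTerm, derivative_sum, derivative_mul, derivative_C,
    mul_zero, add_zero, derivative_prod_finset, derivative_sub, derivative_X, sub_zero, mul_one,
    Finset.sum_mul]
  refine Finset.sum_comm' (fun M j => ?_) |>.trans (Finset.sum_congr rfl fun j _ =>
    Finset.sum_congr rfl fun M _ => by rw [Finset.erase_sdiff_comm])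
  simp only [mem_matchings, isMatching_erase_iff, Finset.mem_sdiff]
  tauto

lemma natDegree_matchingTerm_le (M : Finset (Fin n × Fin n)) :
    (matchingTerm r lam A M).natDegree ≤ (A \ mVerts M).card := by
  refine (natDegree_mul_le_of_le (natDegree_prod_le _ _) (natDegree_C _).le).trans ?_
  simp

theorem mu_monic : (mu r lam A).Monic := by
  have hempty : (∅ : Finset (Fin n × Fin n)) ∈ matchings lam A :=
    mem_matchings.mpr ⟨by simp, by simp⟩
  rw [mu_eq_sum_matchingTerm, ← Finset.add_sum_erase _ _ hempty]
  have hmonic : (matchingTerm r lam A ∅).Monic := by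
    simpa [matchingTerm, mVerts] using monic_prod_X_sub_C r A
  have hdeg : (matchingTerm r lam A ∅).degree = A.card := by
    rw [degree_eq_natDegree hmonic.ne_zero]
    simp [matchingTerm, mVerts]
  refine hmonic.add_of_left ((degree_sum_le _ _).trans_lt ((Finset.sup_lt_iff ?_).mpr ?_))
  · simp [hdeg]
  · intro M hM
    obtain ⟨hM0, hM⟩ := Finset.mem_erase.mp hM
    obtain ⟨e, he⟩ := Finset.nonempty_iff_ne_empty.mpr hM0
    have hlt : (A \ mVerts M).card < A.card := by
      refine Finset.card_lt_card (Finset.ssubset_iff_of_subset Finset.sdiff_subset |>.mpr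
        ⟨e.1, ((mem_matchings.mp hM).1 e he).2.2.1, fun h => (Finset.mem_sdiff.mp h).2 ?_⟩)
      exact mem_mVerts.mpr ⟨e, he, Or.inl rfl⟩
    rw [hdeg]
    exact (degree_le_natDegree.trans (Nat.cast_le.mpr (natDegree_matchingTerm_le M))).trans_lt
      (Nat.cast_lt.mpr hlt)

end Derivative

section Paths

variable {n : ℕ} {lam : Fin n → Fin n → ℝ} {A : Finset (Fin n)} {i j k : Fin n}
  {l t : List (Fin n)}

lemma isPathIn_finite (lam : Fin n → Fin n → ℝ) (A : Finset (Fin n)) (i j : Fin n) :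
    {l : List (Fin n) | IsPathIn lam A i j l}.Finite :=
  (List.finite_length_le (Fin n) n).subset fun l hl => by
    simpa using hl.2.1.length_le_card

noncomputable def pathFinset (lam : Fin n → Fin n → ℝ) (A : Finset (Fin n)) (i j : Fin n) :
    Finset (List (Fin n)) :=
  (isPathIn_finite lam A i j).toFinset

lemma mem_pathFinset : l ∈ pathFinset lam A i j ↔ IsPathIn lam A i j l :=
  Set.Finite.mem_toFinset _

lemma finsum_mem_isPathIn {β : Type*} [AddCommMonoid β] (f : List (Fin n) → β) :
    ∑ᶠ l ∈ {l : List (Fin n) | IsPathIn lam A i j l}, f l = ∑ l ∈ pathFinset lam A i j, f l :=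
  finsum_mem_eq_finite_toFinset_sum f (isPathIn_finite lam A i j)

lemma IsPathIn.head?_eq (h : IsPathIn lam A i j l) : l.head? = some i := h.2.2.2.1

lemma isPathIn_cons_iff (ht : t.head? = some k) :
    IsPathIn lam A i j (i :: t) ↔ i ∈ A ∧ lam i k ≠ 0 ∧ IsPathIn lam (A.erase i) k j t := by
  obtain ⟨k, t, rfl⟩ : ∃ t', t = k :: t' := by
    match t, ht with
    | _ :: t', h => exact ⟨t', by simpa using h⟩
  simp only [IsPathIn, List.Chain', List.isChain_cons_cons, List.nodup_cons,
    List.getLast?_cons_cons, List.head?_cons, List.mem_cons, Finset.mem_erase]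
  grind

lemma IsPathIn.exists_eq_cons (h : IsPathIn lam A i j l) (hij : i ≠ j) :
    ∃ k t, t.head? = some k ∧ l = i :: t := by
  obtain ⟨hne, -, -, hhead, hlast, -⟩ := h
  match l with
  | [] => exact absurd rfl hne
  | [a] => simp_all
  | a :: b :: t => exact ⟨b, b :: t, rfl, by simpa using hhead⟩

lemma pathFinset_self (hj : j ∈ A) : pathFinset lam A j j = {[j]} := by
  ext l
  rw [mem_pathFinset, Finset.mem_singleton]
  constructor
  · rintro ⟨hne, hnd, -, hhead, hlast, -⟩
    match l with
    | [] => exact absurd rfl hne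
    | [a] => simpa using hhead
    | a :: b :: t =>
      simp only [List.head?_cons, Option.some.injEq] at hhead
      subst hhead
      rw [List.getLast?_cons_cons] at hlast
      exact absurd (List.mem_of_getLast? hlast) (List.nodup_cons.mp hnd).1
  · rintro rfl
    exact ⟨by simp, by simp, by simpa using hj, rfl, rfl, List.isChain_singleton j⟩

theorem sum_pathFinset_eq_sum_first_step {β : Type*} [AddCommMonoid β] (hi : i ∈ A)
    (hij : i ≠ j) (f : List (Fin n) → β) :
    ∑ l ∈ pathFinset lam A i j, f l =
      ∑ k ∈ (A.erase i).filter (lam i · ≠ 0), ∑ t ∈ pathFinset lam (A.erase i) k j, f (i :: t) := by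
  rw [Finset.sum_sigma']
  symm
  refine Finset.sum_bij (fun p _ => i :: p.2) (fun p hp => ?_) (fun p hp q hq hpq => ?_)
    (fun l hl => ?_) (fun _ _ => rfl)
  · simp only [Finset.mem_sigma, Finset.mem_filter, mem_pathFinset] at hp
    exact mem_pathFinset.mpr ((isPathIn_cons_iff hp.2.head?_eq).mpr ⟨hi, hp.1.2, hp.2⟩)
  · simp only [Finset.mem_sigma, mem_pathFinset] at hp hq
    obtain ⟨k, t⟩ := p
    obtain ⟨k', t'⟩ := q
    obtain rfl : t = t' := List.cons_injective hpq
    obtain rfl : k = k' := Option.some_injective _ (hp.2.head?_eq.symm.trans hq.2.head?_eq)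
    rfl
  · obtain ⟨k, t, ht, rfl⟩ := (mem_pathFinset.mp hl).exists_eq_cons hij
    obtain ⟨-, hk, ht'⟩ := (isPathIn_cons_iff ht).mp (mem_pathFinset.mp hl)
    refine ⟨⟨k, t⟩, ?_, rfl⟩
    simp only [Finset.mem_sigma, Finset.mem_filter, mem_pathFinset]
    exact ⟨⟨ht'.2.2.1 k (List.mem_of_mem_head? ht), hk⟩, ht'⟩

lemma pathWeight_singleton (lam : Fin n → Fin n → ℝ) (j : Fin n) : pathWeight lam [j] = 1 := by
  simp [pathWeight]

lemma pathWeight_cons (ht : t.head? = some k) :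
    pathWeight lam (i :: t) = -lam i k * pathWeight lam t := by
  match t, ht with
  | b :: t', h =>
    obtain rfl : b = k := by simpa using h
    simp [pathWeight]

end Paths

section HeilmannLieb

variable {n : ℕ} {r : Fin n → ℝ} {lam : Fin n → Fin n → ℝ} {A : Finset (Fin n)} {i j : Fin n}

noncomputable def pathSum (r : Fin n → ℝ) (lam : Fin n → Fin n → ℝ) (A : Finset (Fin n))
    (i j : Fin n) : ℝ[X] :=
  ∑ l ∈ pathFinset lam A i j, C (pathWeight lam l) * mu r lam (A \ l.toFinset) ^ 2

lemma pathSum_self (hj : j ∈ A) : pathSum r lam A j j = mu r lam (A.erase j) ^ 2 := by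
  simp [pathSum, pathFinset_self hj, pathWeight_singleton, Finset.sdiff_singleton_eq_erase]

lemma pathSum_eq_first_step (hi : i ∈ A) (hj : j ∈ A.erase i) :
    pathSum r lam A i j = C (-lam i j) * mu r lam ((A.erase i).erase j) ^ 2 +
      ∑ k ∈ (A.erase i).erase j, C (-lam i k) * pathSum r lam (A.erase i) k j := by
  have hstep : ∀ k, ∑ t ∈ pathFinset lam (A.erase i) k j,
      C (pathWeight lam (i :: t)) * mu r lam (A \ (i :: t).toFinset) ^ 2 =
        C (-lam i k) * pathSum r lam (A.erase i) k j := fun k => by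
    rw [pathSum, Finset.mul_sum]
    refine Finset.sum_congr rfl fun t ht => ?_
    rw [pathWeight_cons (mem_pathFinset.mp ht).head?_eq, List.toFinset_cons, Finset.sdiff_insert,
      ← Finset.erase_sdiff_comm, map_mul, mul_assoc]
  rw [pathSum, sum_pathFinset_eq_sum_first_step hi (Finset.ne_of_mem_erase hj).symm,
    Finset.sum_congr rfl fun k _ => hstep k, Finset.sum_filter_of_ne, ← Finset.add_sum_erase _ _ hj,
    pathSum_self hj]
  intro k _ hk h0
  simp [h0] at hk

lemma mu_mul_sub_eq_first_step (hsym : ∀ j k, lam j k = lam k j) (hi : i ∈ A)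
    (hj : j ∈ A.erase i) :
    mu r lam (A.erase i) * mu r lam (A.erase j) - mu r lam A * mu r lam ((A.erase i).erase j) =
      C (-lam i j) * mu r lam ((A.erase i).erase j) ^ 2 +
      ∑ k ∈ (A.erase i).erase j, C (-lam i k) * (mu r lam ((A.erase i).erase k) *
        mu r lam ((A.erase i).erase j) - mu r lam (A.erase i) *
          mu r lam (((A.erase i).erase k).erase j)) := by
  set B := A.erase i
  have hexp : mu r lam (A.erase j) = (X - C (r i)) * mu r lam (B.erase j) +
      ∑ k ∈ B.erase j, C (lam i k) * mu r lam ((B.erase j).erase k) := by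
    rw [mu_eq_vertex_expansion hsym (Finset.mem_erase.mpr ⟨(Finset.ne_of_mem_erase hj).symm, hi⟩),
      Finset.erase_right_comm]
  have hsum : ∑ k ∈ B.erase j, C (-lam i k) * (mu r lam (B.erase k) * mu r lam (B.erase j) -
        mu r lam B * mu r lam ((B.erase k).erase j)) =
      mu r lam B * ∑ k ∈ B.erase j, C (lam i k) * mu r lam ((B.erase j).erase k) -
        (∑ k ∈ B.erase j, C (lam i k) * mu r lam (B.erase k)) * mu r lam (B.erase j) := by
    rw [Finset.mul_sum, Finset.sum_mul, ← Finset.sum_sub_distrib]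
    refine Finset.sum_congr rfl fun k _ => ?_
    rw [Finset.erase_right_comm (s := B) (a := k), map_neg]
    ring
  rw [hexp, hsum, mu_eq_vertex_expansion hsym hi, ← Finset.add_sum_erase _ _ hj, map_neg]
  ring

theorem heilmann_lieb (hsym : ∀ j k, lam j k = lam k j) (hi : i ∈ A) (hj : j ∈ A)
    (hij : i ≠ j) :
    mu r lam (A.erase i) * mu r lam (A.erase j) - mu r lam A * mu r lam ((A.erase i).erase j) =
      pathSum r lam A i j := by
  induction A using Finset.strongInduction generalizing i with
  | _ A ih =>
    have hj' : j ∈ A.erase i := Finset.mem_erase.mpr ⟨hij.symm, hj⟩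
    rw [mu_mul_sub_eq_first_step hsym hi hj', pathSum_eq_first_step hi hj']
    congr 1
    refine Finset.sum_congr rfl fun k hk => ?_
    rw [ih _ (Finset.erase_ssubset hi) (Finset.mem_of_mem_erase hk) hj'
      (Finset.ne_of_mem_erase hk)]

theorem derivative_mu_mul_sub (hsym : ∀ j k, lam j k = lam k j) (hi : i ∈ A) :
    derivative (mu r lam A) * mu r lam (A.erase i) -
        mu r lam A * derivative (mu r lam (A.erase i)) =
      mu r lam (A.erase i) ^ 2 + ∑ j ∈ A.erase i, pathSum r lam A i j := by
  rw [derivative_mu, derivative_mu, Finset.sum_mul, ← Finset.add_sum_erase _ _ hi, Finset.mul_sum,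
    add_sub_assoc, ← Finset.sum_sub_distrib, sq]
  congr 1
  refine Finset.sum_congr rfl fun j hj => ?_
  rw [mul_comm, heilmann_lieb hsym hi (Finset.mem_of_mem_erase hj) (Finset.ne_of_mem_erase hj).symm]

end HeilmannLieb

theorem stmt_4_general (n : ℕ) (r : Fin n → ℝ) (lam : Fin n → Fin n → ℝ)
    (hsym : ∀ j k, lam j k = lam k j) (i : Fin n) :
    (Polynomial.derivative (mu r lam (Finset.univ : Finset (Fin n))) =
        ∑ j : Fin n, mu r lam (Finset.univ.erase j)) ∧
    ((toRF (Polynomial.derivative (mu r lam Finset.univ)) *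
          toRF (mu r lam (Finset.univ.erase i)) -
        toRF (mu r lam Finset.univ) *
          toRF (Polynomial.derivative (mu r lam (Finset.univ.erase i)))) /
        toRF (mu r lam (Finset.univ.erase i)) ^ 2 =
      1 + ∑ j ∈ Finset.univ.erase i,
        ∑ᶠ l ∈ {l : List (Fin n) | IsPathIn lam Finset.univ i j l},
          algebraMap ℝ (RatFunc ℝ) (pathWeight lam l) *
            (toRF (mu r lam (Finset.univ \ l.toFinset)) /
              toRF (mu r lam (Finset.univ.erase i))) ^ 2) := by
  refine ⟨derivative_mu _, ?_⟩
  have hq : toRF (mu r lam (Finset.univ.erase i)) ^ 2 ≠ 0 :=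
    pow_ne_zero 2 (RatFunc.algebraMap_ne_zero mu_monic.ne_zero)
  have hnum := congrArg toRF (derivative_mu_mul_sub (r := r) hsym (Finset.mem_univ i))
  simp only [pathSum, toRF, map_sub, map_mul, map_add, map_pow, map_sum] at hnum
  simp only [toRF] at hq ⊢
  rw [hnum, add_div, div_self hq, Finset.sum_div]
  congr 1
  refine Finset.sum_congr rfl fun j _ => ?_
  rw [finsum_mem_isPathIn, Finset.sum_div]
  refine Finset.sum_congr rfl fun l _ => ?_
  rw [← Polynomial.algebraMap_eq, ← IsScalarTower.algebraMap_apply, div_pow, mul_div_assoc]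

/-- (i) `μ(G)' = ∑_j μ(G∖j)`; (ii) the derivative of the rational function
`α_i(G) = μ(G)/μ(G∖i)` (written via the quotient rule) equals
`1 + ∑_{j ≠ i} ∑_{c ∈ [i→j]} λ_c · (μ(G∖c)/μ(G∖i))²` as an identity of rational
functions. -/
theorem stmt_4 (n : ℕ) (hn : 0 < n) (r : Fin n → ℝ) (lam : Fin n → Fin n → ℝ)
    (hsym : ∀ j k, lam j k = lam k j) (hnonpos : ∀ j k, lam j k ≤ 0)
    (hdiag : ∀ i, lam i i = 0) (i : Fin n) :
    (Polynomial.derivative (mu r lam (Finset.univ : Finset (Fin n))) =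
        ∑ j : Fin n, mu r lam (Finset.univ.erase j)) ∧
    ((toRF (Polynomial.derivative (mu r lam Finset.univ)) *
          toRF (mu r lam (Finset.univ.erase i)) -
        toRF (mu r lam Finset.univ) *
          toRF (Polynomial.derivative (mu r lam (Finset.univ.erase i)))) /
        toRF (mu r lam (Finset.univ.erase i)) ^ 2 =
      1 + ∑ j ∈ Finset.univ.erase i,
        ∑ᶠ l ∈ {l : List (Fin n) | IsPathIn lam Finset.univ i j l},
          algebraMap ℝ (RatFunc ℝ) (pathWeight lam l) *
            (toRF (mu r lam (Finset.univ \ l.toFinset)) /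
              toRF (mu r lam (Finset.univ.erase i))) ^ 2) :=
  stmt_4_general n r lam hsym i
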